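/- For every u ∈ U₀, the finite harmonic function φ_u is multiplicative: Σ_γ c^γ_{α,β}·φ_u(γ) = φ_u(α)·φ_u(β) for all compositions α and β (hence φ_u is an indecomposable finite harmonic function on GK). -/

import Mathlib

/-!
Write `Σ_γ c^γ_{α,β} F(γ)` as the sum of `F` over the list of quasi-shuffles of `α` and `β`,
taken with multiplicity: the pairs `(f, g)` counted by `c^γ_{α,β}` split according to whether
`f`, `g` or both hit the first part of `γ`, which is the recursion generating quasi-shuffles.
Call `F` a character when this sum is `F(α) F(β)`. Peeling off the first interval of `u`
exhibits `M°(u)` as the deconcatenation convolution of a one-block weight with `M°` of the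
rest. Quasi-shuffling is compatible with deconcatenation, so convolutions of characters are
characters, and it remains to check the one-block weights: `w^{|λ|}` on compositions with at
most one part, and `w^ℓ/ℓ!` on compositions of ones, where the `binom(k+l, k)` shuffles of
`1^k` and `1^l` give `binom(k+l, k) w^{k+l}/(k+l)! = (w^k/k!)(w^l/l!)`.
-/

open scoped ENNReal NNReal

namespace GK

/-! ## The Gnedin–Kingman graph -/

/-- Decrement (if the part is ≥ 2) or delete (otherwise) the part of `μ` at position `p`. -/
def stepAt (μ : List ℕ) (p : ℕ) : List ℕ :=
  if 2 ≤ μ.getD p 0 then μ.set p (μ.getD p 0 - 1) else μ.eraseIdx p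

/-- Edge multiplicity `κ(ν,μ)` of the Gnedin–Kingman graph: the number of positions of `μ`
at which decrementing a part ≥ 2 (or deleting a part equal to 1) produces `ν`. -/
def kappa (ν μ : List ℕ) : ℕ :=
  ((Finset.range μ.length).filter fun p => stepAt μ p = ν).card

/-- `ν ↗ μ`. -/
def Rel (ν μ : List ℕ) : Prop := 0 < kappa ν μ

def IsComposition (l : List ℕ) : Prop := ∀ n ∈ l, 0 < n

/-- Compositions: finite lists of positive integers. -/
abbrev Comp := {l : List ℕ // IsComposition l}

/-- The empty composition ∅. -/
def cEmpty : Comp := ⟨[], fun _ h => nomatch h⟩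

/-- Harmonicity, for `[0,∞]`-valued functions on the Gnedin–Kingman graph
(with the conventions `0·∞ = 0` and `x + ∞ = ∞` of `ℝ≥0∞`). -/
def HarmonicE (φ : Comp → ℝ≥0∞) : Prop :=
  ∀ l : Comp, φ l = ∑' μ : Comp, (kappa l.1 μ.1 : ℝ≥0∞) * φ μ

/-- Harmonicity, for real-valued functions. -/
def HarmonicR (φ : Comp → ℝ) : Prop :=
  ∀ l : Comp, φ l = ∑' μ : Comp, (kappa l.1 μ.1 : ℝ) * φ μ

/-- A finite harmonic function: real-valued (hence finite), nonnegative, harmonic. -/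
def FiniteHarmonic (φ : Comp → ℝ) : Prop :=
  HarmonicR φ ∧ ∀ l, 0 ≤ φ l

/-- The quasi-shuffle coefficient `c^γ_{α,β}`: the number of pairs of strictly increasing
maps `f, g` into the positions of `γ` which jointly cover all positions of `γ` and such that
each part of `γ` is the sum of the corresponding parts of `α` and `β`. -/
noncomputable def qsCoeff (α β γ : List ℕ) : ℕ :=
  Nat.card {fg : (Fin α.length → Fin γ.length) × (Fin β.length → Fin γ.length) //
    StrictMono fg.1 ∧ StrictMono fg.2 ∧
    (∀ s, (∃ i, fg.1 i = s) ∨ (∃ j, fg.2 j = s)) ∧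
    ∀ s : Fin γ.length,
      γ.get s = (∑ i, if fg.1 i = s then α.get i else 0) +
                (∑ j, if fg.2 j = s then β.get j else 0)}

/-- Indecomposability of a finite harmonic function normalized at ∅. -/
def IndecFin (φ : Comp → ℝ) : Prop :=
  ∀ φ₁ φ₂ : Comp → ℝ, FiniteHarmonic φ₁ → FiniteHarmonic φ₂ →
    φ₁ cEmpty = 1 → φ₂ cEmpty = 1 →
    ∀ c₁ c₂ : ℝ, 0 < c₁ → 0 < c₂ → c₁ + c₂ = 1 →
      (∀ l, φ l = c₁ * φ₁ l + c₂ * φ₂ l) → φ = φ₁ ∨ φ = φ₂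

/-! ## Typed weight sequences, `M°_λ` and `U₀` -/

/-- `M°_λ(v)` for a typed weight sequence `v` (`true` = h, `false` = v): the sum over all
decompositions of `λ` into consecutive (possibly empty) blocks, one for each entry of `v`,
where an h-block has at most one part and contributes `w^{|block|}`, and a v-block has all
parts equal to 1 and contributes `w^{ℓ}/ℓ!`. -/
noncomputable def Mcirc : List (ℝ × Bool) → List ℕ → ℝ
  | [], l => if l = [] then 1 else 0
  | (w, t) :: v, l =>
      ∑ i ∈ Finset.range (l.length + 1),
        (if t then (if (l.take i).length ≤ 1 then w ^ (l.take i).sum else 0)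
         else if ∀ n ∈ l.take i, n = 1 then
           w ^ (l.take i).length / ((l.take i).length.factorial : ℝ)
         else 0) * Mcirc v (l.drop i)

/-- Membership in `U₀`: positive weights of total sum 1, no two consecutive v's. -/
def memU0 (u : List (ℝ × Bool)) : Prop :=
  (∀ p ∈ u, 0 < p.1) ∧ (u.map Prod.fst).sum = 1 ∧
    List.Chain' (fun p q => p.2 = true ∨ q.2 = true) u

/-- `t_n(u)`: replace each h-interval by a part `n` and each v-interval by `n` ones. -/
def tnU (u : List (ℝ × Bool)) (n : ℕ) : List ℕ :=
  (u.map fun p => if p.2 then [n] else List.replicate n 1).flatten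

/-- Merge each maximal run of consecutive v-intervals into a single v-interval,
summing the weights. -/
def mergeV : List (ℝ × Bool) → List (ℝ × Bool)
  | [] => []
  | (w, true) :: rest => (w, true) :: mergeV rest
  | (w, false) :: rest =>
      match mergeV rest with
      | (w', false) :: rest' => (w + w', false) :: rest'
      | r => (w, false) :: r

/-! ## The set `Ũ₀` and the functions `φ_ũ` -/

/-- An element of `Ũ₀`. `t i = true` means type h, `false` means type v; `sep i` are the
separating compositions λ₀, …, λ_m. Only `w i`, `t i` for `i < m` and `sep i` for `i ≤ m`
are relevant. -/
structure UTilde where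
  m : ℕ
  w : ℕ → ℝ
  t : ℕ → Bool
  sep : ℕ → List ℕ
  sep_pos : ∀ i, i ≤ m → ∀ n ∈ sep i, 0 < n
  sep_nonempty : ∃ i, i ≤ m ∧ sep i ≠ []
  w_pos : ∀ i, i < m → 0 < w i
  w_sum : ∑ i ∈ Finset.range m, w i = 1
  vv : ∀ i, i + 1 < m → t i = false → t (i + 1) = false → sep (i + 1) ≠ []
  v_left : ∀ i, i < m → t i = false → sep i ≠ [] → 2 ≤ (sep i).getLastD 0
  v_right : ∀ i, i < m → t i = false → sep (i + 1) ≠ [] → 2 ≤ (sep (i + 1)).headD 0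

namespace UTilde

variable (u : UTilde)

/-- `λ₀ ⊔ f 0 ⊔ λ₁ ⊔ … ⊔ f (m-1) ⊔ λ_m`. -/
def blocks (f : ℕ → List ℕ) : List ℕ :=
  u.sep 0 ++ (List.ofFn fun i : Fin u.m => f (i : ℕ) ++ u.sep ((i : ℕ) + 1)).flatten

/-- `t_n(ũ)`. -/
def tn (n : ℕ) : List ℕ :=
  u.blocks fun i => if u.t i then [n] else List.replicate n 1

/-- Membership in `GK_ũ`. -/
def GKmem (l : List ℕ) : Prop := ∃ n, 1 ≤ n ∧ Relation.ReflTransGen Rel l (u.tn n)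

/-- Position `i` (of type h) is adjacent to a v-interval. -/
def adj (i : ℕ) : Prop :=
  (0 < i ∧ u.t (i - 1) = false ∧ u.sep i = []) ∨
  (i + 1 < u.m ∧ u.t (i + 1) = false ∧ u.sep (i + 1) = [])

instance (i : ℕ) : Decidable (u.adj i) := by unfold adj; infer_instance

def d (i : ℕ) : ℕ := if u.adj i then 2 else 1

/-- `λ(a,b)`, where `c` encodes both vectors: `a i = c i` on h-positions and
`b i = c i` on v-positions. -/
def lam (c : ℕ → ℕ) : List ℕ :=
  u.blocks fun i => if u.t i then [u.d i + c i] else List.replicate (c i) 1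

/-- `λ_ũ = λ(0,0)`. -/
def lam0 : List ℕ := u.lam fun _ => 0

/-- `Π_{i : t_i = h} w_i^{a_i} · Π_{i : t_i = v} w_i^{b_i}/b_i!`. -/
noncomputable def phiVal (c : ℕ → ℕ) : ℝ≥0∞ :=
  ∏ i ∈ Finset.range u.m,
    if u.t i then ENNReal.ofReal (u.w i) ^ c i
    else ENNReal.ofReal (u.w i) ^ c i / ((c i).factorial : ℝ≥0∞)

open Classical in
/-- The semifinite harmonic function `φ_ũ`. -/
noncomputable def phi (l : List ℕ) : ℝ≥0∞ :=
  if h : ∃ c : ℕ → ℕ, l = u.lam c then u.phiVal h.choose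
  else if u.GKmem l then ⊤ else 0

/-- `u^ε(ũ)`: each part of each separating composition is replaced by an h-interval
of length `ε`. -/
def uEps (ε : ℝ) : List (ℝ × Bool) :=
  ((u.sep 0).map fun _ => (ε, true)) ++
    (List.ofFn fun i : Fin u.m =>
      (u.w (i : ℕ), u.t (i : ℕ)) :: ((u.sep ((i : ℕ) + 1)).map fun _ => (ε, true))).flatten

/-- `n(ũ) = |λ₀| + … + |λ_m|`. -/
def nU : ℕ := ∑ i ∈ Finset.range (u.m + 1), (u.sep i).sum

/-- The list of intervals of `ũ` (separating compositions dropped). -/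
def ubarList : List (ℝ × Bool) := List.ofFn fun i : Fin u.m => (u.w (i : ℕ), u.t (i : ℕ))

end UTilde

/-! ## The cone `K` and the maps `F_φ` -/

/-- `V`: finitely supported real functions on compositions. -/
abbrev V := Comp →₀ ℝ

/-- `W`: span of the vectors `e_λ − Σ_μ κ(λ,μ)·e_μ`. -/
noncomputable def Wsub : Submodule ℝ V :=
  Submodule.span ℝ
    {x : V | ∃ l : Comp, ∀ μ : Comp, x μ = (if μ = l then 1 else 0) - (kappa l.1 μ.1 : ℝ)}

/-- `R = V/W`. -/
abbrev Rq := V ⧸ Wsub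

/-- The cone `K ⊆ R`: classes of nonnegative vectors. -/
def Kcone : Set Rq :=
  {a | ∃ x : V, (∀ μ, 0 ≤ x μ) ∧ Submodule.Quotient.mk x = a}

/-- `Σ_λ x(λ)·φ(λ)` for a representative `x`. -/
noncomputable def FphiV (φ : Comp → ℝ≥0∞) (x : V) : ℝ≥0∞ :=
  ∑' μ : Comp, ENNReal.ofReal (x μ) * φ μ

open Classical in
/-- `F_φ : K → [0,∞]` (defined via a choice of nonnegative representative; for harmonic `φ`
it is well defined). Outside `K` we set it to `0`. -/
noncomputable def Fphi (φ : Comp → ℝ≥0∞) (a : Rq) : ℝ≥0∞ :=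
  if h : a ∈ Kcone then FphiV φ h.choose else 0

/-- Semifiniteness: not finite, and `F_φ` is determined by its finite values from below. -/
def Semifinite (φ : Comp → ℝ≥0∞) : Prop :=
  (¬ ∀ l, φ l < ⊤) ∧
    ∀ a ∈ Kcone, Fphi φ a =
      sSup {y | ∃ b ∈ Kcone, a - b ∈ Kcone ∧ Fphi φ b < ⊤ ∧ y = Fphi φ b}

/-- Indecomposability of a semifinite harmonic function. -/
def IndecSemifinite (φ : Comp → ℝ≥0∞) : Prop :=
  ∀ ψ : Comp → ℝ≥0∞, HarmonicE ψ →
    (((∀ l, ψ l < ⊤) ∧ ψ ≠ 0) ∨ Semifinite ψ) →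
    (∀ a ∈ Kcone, Fphi ψ a ≤ Fphi φ a) →
    ∃ c : ℝ≥0, ∀ l, ψ l = (c : ℝ≥0∞) * φ l

end GK

namespace GK

open Finset

lemma natCard_subtype_eq_of_injective {α β : Type*} {P : α → Prop} {Q : β → Prop} (Φ : α → β)
    (hΦ : Function.Injective Φ) (hPQ : ∀ a, Q (Φ a) ↔ P a) (hQ : ∀ b, Q b → ∃ a, Φ a = b) :
    Nat.card {b // Q b} = Nat.card {a // P a} := by
  refine (Nat.card_congr (Equiv.ofBijective (fun a : {a // P a} => ⟨Φ a, (hPQ a).2 a.2⟩)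
    ⟨fun a a' h => Subtype.ext (hΦ (congrArg Subtype.val h)), fun b => ?_⟩)).symm
  obtain ⟨a, ha⟩ := hQ b b.2
  exact ⟨⟨a, (hPQ a).1 (ha ▸ b.2)⟩, Subtype.ext ha⟩

lemma natCard_subtype_eq_add_add {α : Type*} [Finite α] (P p q : α → Prop)
    (h : ∀ a, P a → p a ∨ q a) :
    Nat.card {a // P a} = Nat.card {a // P a ∧ p a ∧ ¬q a} +
      Nat.card {a // P a ∧ ¬p a ∧ q a} + Nat.card {a // P a ∧ p a ∧ q a} := by
  change Nat.card {a | P a} = Nat.card {a | P a ∧ p a ∧ ¬q a} +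
    Nat.card {a | P a ∧ ¬p a ∧ q a} + Nat.card {a | P a ∧ p a ∧ q a}
  have hsplit : {a | P a} =
      ({a | P a ∧ p a ∧ ¬q a} ∪ {a | P a ∧ ¬p a ∧ q a}) ∪ {a | P a ∧ p a ∧ q a} := by
    ext a
    have := h a
    simp only [Set.mem_ofPred_eq, Set.mem_union]
    tauto
  simp only [Nat.card_coe_set_eq]
  rw [hsplit, Set.ncard_union_eq, Set.ncard_union_eq] <;>
    exact Set.disjoint_left.2 fun a ha hb => by simp_all

section consZero

variable {n r : ℕ}

def consZero (f : Fin n → Fin r) : Fin (n + 1) → Fin (r + 1) := Fin.cons 0 (Fin.succ ∘ f)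

@[simp] lemma consZero_zero (f : Fin n → Fin r) : consZero f 0 = 0 := rfl

@[simp] lemma consZero_succ (f : Fin n → Fin r) (i : Fin n) :
    consZero f i.succ = (f i).succ :=
  rfl

lemma consZero_injective : Function.Injective (consZero : (Fin n → Fin r) → _) :=
  fun _ _ h => (Fin.succ_injective r).comp_left (Fin.cons_injective2 h).2

lemma strictMono_succ_comp_iff {f : Fin n → Fin r} :
    StrictMono (Fin.succ ∘ f) ↔ StrictMono f :=
  ⟨fun h _ _ hab => Fin.succ_lt_succ_iff.1 (h hab), Fin.strictMono_succ.comp⟩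

@[simp] lemma strictMono_consZero_iff {f : Fin n → Fin r} :
    StrictMono (consZero f) ↔ StrictMono f := by
  simp [consZero, Fin.strictMono_cons, Fin.succ_pos, strictMono_succ_comp_iff]

lemma exists_succ_comp_eq {G : Fin n → Fin (r + 1)} (hG : ¬∃ j, G j = 0) :
    ∃ g : Fin n → Fin r, Fin.succ ∘ g = G := by
  push Not at hG
  choose g hg using fun j => Fin.exists_succ_eq.2 (hG j)
  exact ⟨g, funext hg⟩

lemma exists_consZero_eq {F : Fin (n + 1) → Fin (r + 1)} (hF : StrictMono F)
    (h : ∃ i, F i = 0) : ∃ f : Fin n → Fin r, consZero f = F := by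
  obtain ⟨i, hi⟩ := h
  have h0 : F 0 = 0 := Fin.le_zero_iff.1 (hi ▸ hF.monotone (Fin.zero_le i))
  obtain ⟨f, hf⟩ := exists_succ_comp_eq (G := Fin.tail F) fun ⟨j, hj⟩ =>
    (Fin.succ_pos j).ne' (hF.injective (hj.trans h0.symm))
  refine ⟨f, ?_⟩
  rw [← Fin.cons_self_tail F, h0, ← hf]
  rfl

end consZero

lemma isComposition_cons {a : ℕ} {l : List ℕ} :
    IsComposition (a :: l) ↔ 0 < a ∧ IsComposition l :=
  List.forall_mem_cons

lemma IsComposition.take {l : List ℕ} (h : IsComposition l) (k : ℕ) :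
    IsComposition (l.take k) :=
  fun n hn => h n (List.mem_of_mem_take hn)

lemma IsComposition.drop {l : List ℕ} (h : IsComposition l) (k : ℕ) :
    IsComposition (l.drop k) :=
  fun n hn => h n (List.mem_of_mem_drop hn)

def quasiShuffles : List ℕ → List ℕ → List (List ℕ)
  | [], [] => [[]]
  | a :: A, [] => (quasiShuffles A []).map (a :: ·)
  | [], b :: B => (quasiShuffles [] B).map (b :: ·)
  | a :: A, b :: B =>
      (quasiShuffles A (b :: B)).map (a :: ·) ++ (quasiShuffles (a :: A) B).map (b :: ·) ++
        (quasiShuffles A B).map ((a + b) :: ·)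

@[simp] lemma quasiShuffles_nil_left : ∀ y : List ℕ, quasiShuffles [] y = [y]
  | [] => by simp [quasiShuffles]
  | b :: B => by simp [quasiShuffles, quasiShuffles_nil_left B]

@[simp] lemma quasiShuffles_nil_right : ∀ x : List ℕ, quasiShuffles x [] = [x]
  | [] => quasiShuffles_nil_left []
  | a :: A => by simp [quasiShuffles, quasiShuffles_nil_right A]

lemma IsComposition.of_mem_quasiShuffles :
    ∀ {x y γ : List ℕ}, IsComposition x → IsComposition y → γ ∈ quasiShuffles x y →
      IsComposition γ
  | [], _, _, _, hy, hγ => by simp_all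
  | _ :: _, [], _, hx, _, hγ => by simp_all
  | a :: A, b :: B, γ, hx, hy, hγ => by
    rw [isComposition_cons] at hx hy
    simp only [quasiShuffles, List.mem_append, List.mem_map] at hγ
    rcases hγ with (⟨δ, hδ, rfl⟩ | ⟨δ, hδ, rfl⟩) | ⟨δ, hδ, rfl⟩ <;> rw [isComposition_cons]
    · exact ⟨hx.1, of_mem_quasiShuffles hx.2 (isComposition_cons.2 hy) hδ⟩
    · exact ⟨hy.1, of_mem_quasiShuffles (isComposition_cons.2 hx) hy.2 hδ⟩
    · exact ⟨by omega, of_mem_quasiShuffles hx.2 hy.2 hδ⟩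

lemma count_nil_map_cons (a : ℕ) (L : List (List ℕ)) : (L.map (a :: ·)).count [] = 0 :=
  List.count_eq_zero.2 (by simp)

lemma count_cons_map_cons (a c : ℕ) (C : List ℕ) (L : List (List ℕ)) :
    (L.map (a :: ·)).count (c :: C) = if c = a then L.count C else 0 := by
  split_ifs with h
  · subst h
    exact List.count_map_of_injective _ _ List.cons_injective _
  · exact List.count_eq_zero.2 (by simp [Ne.symm h])

lemma hasSum_count_mul (L : List (List ℕ)) (hL : ∀ γ ∈ L, IsComposition γ)
    (F : List ℕ → ℝ) :
    HasSum (fun γ : Comp => (L.count γ.1 : ℝ) * F γ.1) (L.map F).sum := by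
  induction L with
  | nil => simp [hasSum_zero]
  | cons δ L ih =>
    have hδ : IsComposition δ := hL δ List.mem_cons_self
    convert (ih fun γ hγ => hL γ (List.mem_cons_of_mem δ hγ)).add
      (hasSum_ite_eq (⟨δ, hδ⟩ : Comp) (F δ)) using 1
    · funext γ
      by_cases h : γ = ⟨δ, hδ⟩
      · subst h
        simp [add_mul]
      · have : δ ≠ γ.1 := fun e => h (Subtype.ext e.symm)
        simp [this, h]
    · simp [add_comm]

def contrib {r : ℕ} (x : List ℕ) (f : Fin x.length → Fin r) (s : Fin r) : ℕ :=
  ∑ i, if f i = s then x.get i else 0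

def IsQuasiShufflePair (x y γ : List ℕ)
    (fg : (Fin x.length → Fin γ.length) × (Fin y.length → Fin γ.length)) : Prop :=
  StrictMono fg.1 ∧ StrictMono fg.2 ∧ (∀ s, (∃ i, fg.1 i = s) ∨ ∃ j, fg.2 j = s) ∧
    ∀ s, γ.get s = contrib x fg.1 s + contrib y fg.2 s

lemma qsCoeff_eq_natCard (x y γ : List ℕ) :
    qsCoeff x y γ = Nat.card {fg // IsQuasiShufflePair x y γ fg} := rfl

section contrib

variable {r : ℕ}

@[simp] lemma contrib_consZero_zero (a : ℕ) (A : List ℕ) (f : Fin A.length → Fin r) :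
    contrib (a :: A) (consZero f) 0 = a := by
  simp [contrib, Fin.sum_univ_succ, Fin.succ_ne_zero]

@[simp] lemma contrib_consZero_succ (a : ℕ) (A : List ℕ) (f : Fin A.length → Fin r)
    (s : Fin r) : contrib (a :: A) (consZero f) s.succ = contrib A f s := by
  simp [contrib, Fin.sum_univ_succ, (Fin.succ_ne_zero s).symm]

@[simp] lemma contrib_succ_comp_zero (y : List ℕ) (g : Fin y.length → Fin r) :
    contrib y (Fin.succ ∘ g) 0 = 0 := by
  simp [contrib, Fin.succ_ne_zero]

@[simp] lemma contrib_succ_comp_succ (y : List ℕ) (g : Fin y.length → Fin r) (s : Fin r) :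
    contrib y (Fin.succ ∘ g) s.succ = contrib y g s := by
  simp [contrib]

end contrib

lemma isQuasiShufflePair_cons_iff {x y : List ℕ} {c : ℕ} {C : List ℕ}
    (f : Fin x.length → Fin (C.length + 1)) (g : Fin y.length → Fin (C.length + 1)) :
    IsQuasiShufflePair x y (c :: C) (f, g) ↔
      c = contrib x f 0 + contrib y g 0 ∧ ((∃ i, f i = 0) ∨ ∃ j, g j = 0) ∧
        StrictMono f ∧ StrictMono g ∧
        (∀ s : Fin C.length, (∃ i, f i = s.succ) ∨ ∃ j, g j = s.succ) ∧
        ∀ s : Fin C.length, C.get s = contrib x f s.succ + contrib y g s.succ := by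
  refine (and_congr_right fun _ => and_congr_right fun _ =>
    (Fin.forall_fin_succ (n := C.length)).and Fin.forall_fin_succ).trans ?_
  exact ⟨fun ⟨hf, hg, ⟨h0, hs⟩, ⟨e0, es⟩⟩ => ⟨e0, h0, hf, hg, hs, es⟩,
    fun ⟨e0, h0, hf, hg, hs, es⟩ => ⟨hf, hg, ⟨h0, hs⟩, ⟨e0, es⟩⟩⟩

section firstPart

variable {A B C : List ℕ}

lemma isQuasiShufflePair_consZero_succ_iff (a c : ℕ) (y : List ℕ)
    (f : Fin A.length → Fin C.length) (g : Fin y.length → Fin C.length) :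
    IsQuasiShufflePair (a :: A) y (c :: C) (consZero f, Fin.succ ∘ g) ↔
      c = a ∧ IsQuasiShufflePair A y C (f, g) := by
  rw [isQuasiShufflePair_cons_iff]
  simp [IsQuasiShufflePair, strictMono_succ_comp_iff, Fin.exists_fin_succ,
    (Fin.succ_ne_zero _).symm]

lemma isQuasiShufflePair_succ_consZero_iff (b c : ℕ) (x : List ℕ)
    (f : Fin x.length → Fin C.length) (g : Fin B.length → Fin C.length) :
    IsQuasiShufflePair x (b :: B) (c :: C) (Fin.succ ∘ f, consZero g) ↔
      c = b ∧ IsQuasiShufflePair x B C (f, g) := by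
  rw [isQuasiShufflePair_cons_iff]
  simp [IsQuasiShufflePair, strictMono_succ_comp_iff, Fin.exists_fin_succ,
    (Fin.succ_ne_zero _).symm]

lemma isQuasiShufflePair_consZero_consZero_iff (a b c : ℕ)
    (f : Fin A.length → Fin C.length) (g : Fin B.length → Fin C.length) :
    IsQuasiShufflePair (a :: A) (b :: B) (c :: C) (consZero f, consZero g) ↔
      c = a + b ∧ IsQuasiShufflePair A B C (f, g) := by
  rw [isQuasiShufflePair_cons_iff]
  simp [IsQuasiShufflePair, Fin.exists_fin_succ, (Fin.succ_ne_zero _).symm]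

lemma natCard_firstPartFromLeft (a c : ℕ) (y : List ℕ) :
    Nat.card {fg // IsQuasiShufflePair (a :: A) y (c :: C) fg ∧ (∃ i, fg.1 i = 0) ∧
      ¬∃ j, fg.2 j = 0} = if c = a then qsCoeff A y C else 0 := by
  calc _ = Nat.card {fg // c = a ∧ IsQuasiShufflePair A y C fg} := by
        refine natCard_subtype_eq_of_injective (fun fg => (consZero fg.1, Fin.succ ∘ fg.2))
          (consZero_injective.prodMap (Fin.succ_injective _).comp_left) ?_ ?_
        · rintro ⟨f, g⟩
          exact (and_iff_left ⟨⟨0, rfl⟩, by simp [Fin.succ_ne_zero]⟩).trans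
            (isQuasiShufflePair_consZero_succ_iff a c y f g)
        · rintro ⟨F, G⟩ ⟨hq, hF, hG⟩
          obtain ⟨f, rfl⟩ := exists_consZero_eq hq.1 hF
          obtain ⟨g, rfl⟩ := exists_succ_comp_eq hG
          exact ⟨(f, g), rfl⟩
    _ = _ := by split_ifs with h <;> simp [h, qsCoeff_eq_natCard]

lemma natCard_firstPartFromRight (b c : ℕ) (x : List ℕ) :
    Nat.card {fg // IsQuasiShufflePair x (b :: B) (c :: C) fg ∧ (¬∃ i, fg.1 i = 0) ∧
      ∃ j, fg.2 j = 0} = if c = b then qsCoeff x B C else 0 := by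
  calc _ = Nat.card {fg // c = b ∧ IsQuasiShufflePair x B C fg} := by
        refine natCard_subtype_eq_of_injective (fun fg => (Fin.succ ∘ fg.1, consZero fg.2))
          ((Fin.succ_injective _).comp_left.prodMap consZero_injective) ?_ ?_
        · rintro ⟨f, g⟩
          exact (and_iff_left ⟨by simp [Fin.succ_ne_zero], ⟨0, rfl⟩⟩).trans
            (isQuasiShufflePair_succ_consZero_iff b c x f g)
        · rintro ⟨F, G⟩ ⟨hq, hF, hG⟩
          obtain ⟨f, rfl⟩ := exists_succ_comp_eq hF
          obtain ⟨g, rfl⟩ := exists_consZero_eq hq.2.1 hG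
          exact ⟨(f, g), rfl⟩
    _ = _ := by split_ifs with h <;> simp [h, qsCoeff_eq_natCard]

lemma natCard_firstPartFromBoth (a b c : ℕ) :
    Nat.card {fg // IsQuasiShufflePair (a :: A) (b :: B) (c :: C) fg ∧ (∃ i, fg.1 i = 0) ∧
      ∃ j, fg.2 j = 0} = if c = a + b then qsCoeff A B C else 0 := by
  calc _ = Nat.card {fg // c = a + b ∧ IsQuasiShufflePair A B C fg} := by
        refine natCard_subtype_eq_of_injective (fun fg => (consZero fg.1, consZero fg.2))
          (consZero_injective.prodMap consZero_injective) ?_ ?_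
        · rintro ⟨f, g⟩
          exact (and_iff_left ⟨⟨0, rfl⟩, ⟨0, rfl⟩⟩).trans
            (isQuasiShufflePair_consZero_consZero_iff a b c f g)
        · rintro ⟨F, G⟩ ⟨hq, hF, hG⟩
          obtain ⟨f, rfl⟩ := exists_consZero_eq hq.1 hF
          obtain ⟨g, rfl⟩ := exists_consZero_eq hq.2.1 hG
          exact ⟨(f, g), rfl⟩
    _ = _ := by split_ifs with h <;> simp [h, qsCoeff_eq_natCard]

lemma qsCoeff_cons (x y : List ℕ) (c : ℕ) :
    qsCoeff x y (c :: C) =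
      Nat.card {fg // IsQuasiShufflePair x y (c :: C) fg ∧ (∃ i, fg.1 i = 0) ∧
        ¬∃ j, fg.2 j = 0} +
      Nat.card {fg // IsQuasiShufflePair x y (c :: C) fg ∧ (¬∃ i, fg.1 i = 0) ∧
        ∃ j, fg.2 j = 0} +
      Nat.card {fg // IsQuasiShufflePair x y (c :: C) fg ∧ (∃ i, fg.1 i = 0) ∧
        ∃ j, fg.2 j = 0} :=
  natCard_subtype_eq_add_add _ _ _ fun fg h =>
    ((isQuasiShufflePair_cons_iff fg.1 fg.2).1 h).2.1

end firstPart

theorem qsCoeff_eq_count (x y γ : List ℕ) : qsCoeff x y γ = (quasiShuffles x y).count γ := by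
  induction γ generalizing x y with
  | nil =>
    rcases x with _ | ⟨a, A⟩ <;> rcases y with _ | ⟨b, B⟩
    · simp [qsCoeff_eq_natCard, IsQuasiShufflePair, Subsingleton.strictMono]
    all_goals simp [qsCoeff_eq_natCard, quasiShuffles, count_nil_map_cons]
  | cons c C ih =>
    rw [qsCoeff_cons]
    rcases x with _ | ⟨a, A⟩ <;> rcases y with _ | ⟨b, B⟩
    · simp
    · rw [natCard_firstPartFromRight, ih]
      simp only [quasiShuffles, count_cons_map_cons]
      simp
    · rw [natCard_firstPartFromLeft, ih]
      simp only [quasiShuffles, count_cons_map_cons]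
      simp
    · rw [natCard_firstPartFromLeft, natCard_firstPartFromRight, natCard_firstPartFromBoth,
        ih, ih, ih]
      simp only [quasiShuffles, List.count_append, count_cons_map_cons]

def qsSum (x y : List ℕ) (F : List ℕ → ℝ) : ℝ := ((quasiShuffles x y).map F).sum

@[simp] lemma qsSum_nil_left (y : List ℕ) (F : List ℕ → ℝ) : qsSum [] y F = F y := by
  simp [qsSum]

@[simp] lemma qsSum_nil_right (x : List ℕ) (F : List ℕ → ℝ) : qsSum x [] F = F x := by
  simp [qsSum]

lemma qsSum_cons_cons (a b : ℕ) (A B : List ℕ) (F : List ℕ → ℝ) :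
    qsSum (a :: A) (b :: B) F = qsSum A (b :: B) (fun γ => F (a :: γ)) +
      qsSum (a :: A) B (fun γ => F (b :: γ)) + qsSum A B (fun γ => F ((a + b) :: γ)) := by
  simp [qsSum, quasiShuffles, Function.comp_def, add_assoc]

lemma qsSum_add (x y : List ℕ) (F G : List ℕ → ℝ) :
    qsSum x y (fun γ => F γ + G γ) = qsSum x y F + qsSum x y G :=
  List.sum_map_add

lemma qsSum_const_mul (x y : List ℕ) (c : ℝ) (F : List ℕ → ℝ) :
    qsSum x y (fun γ => c * F γ) = c * qsSum x y F :=
  List.sum_map_mul_left _ _ _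

def convolve (G H : List ℕ → ℝ) (γ : List ℕ) : ℝ :=
  ∑ k ∈ range (γ.length + 1), G (γ.take k) * H (γ.drop k)

lemma convolve_cons (G H : List ℕ → ℝ) (d : ℕ) (γ : List ℕ) :
    convolve G H (d :: γ) = G [] * H (d :: γ) + convolve (fun p => G (d :: p)) H γ := by
  rw [convolve, List.length_cons, sum_range_succ', add_comm]
  simp [convolve]

theorem qsSum_convolve : ∀ (x y : List ℕ) (G H : List ℕ → ℝ),
    qsSum x y (convolve G H) = ∑ i ∈ range (x.length + 1), ∑ j ∈ range (y.length + 1),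
      qsSum (x.take i) (y.take j) G * qsSum (x.drop i) (y.drop j) H
  | [], y, G, H => by simp [convolve]
  | a :: A, [], G, H => by simp [convolve]
  | a :: A, b :: B, G, H => by
    rw [qsSum_cons_cons]
    simp only [convolve_cons, qsSum_add, qsSum_const_mul]
    rw [qsSum_convolve A (b :: B), qsSum_convolve (a :: A) B, qsSum_convolve A B]
    simp only [List.length_cons, sum_range_succ', List.take_succ_cons, List.drop_succ_cons,
      List.take_zero, List.drop_zero, qsSum_nil_left, qsSum_nil_right, qsSum_cons_cons, add_mul,
      sum_add_distrib]
    ring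
  termination_by x y => x.length + y.length

def IsQSCharacter (F : List ℕ → ℝ) : Prop :=
  ∀ x y, IsComposition x → IsComposition y → qsSum x y F = F x * F y

lemma isQSCharacter_ite_eq_nil : IsQSCharacter fun l => if l = [] then 1 else 0 := by
  intro x y _ _
  rcases x with _ | ⟨a, A⟩ <;> rcases y with _ | ⟨b, B⟩
  · simp
  · simp
  · simp
  · rw [qsSum_cons_cons]
    simp [qsSum]

lemma IsQSCharacter.convolve {G H : List ℕ → ℝ} (hG : IsQSCharacter G)
    (hH : IsQSCharacter H) : IsQSCharacter (convolve G H) := by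
  intro x y hx hy
  rw [qsSum_convolve, GK.convolve, GK.convolve, sum_mul_sum]
  refine sum_congr rfl fun i _ => sum_congr rfl fun j _ => ?_
  rw [hG _ _ (hx.take i) (hy.take j), hH _ _ (hx.drop i) (hy.drop j)]
  ring

def hBlockWeight (w : ℝ) (p : List ℕ) : ℝ := if p.length ≤ 1 then w ^ p.sum else 0

lemma hBlockWeight_cons (w : ℝ) (d : ℕ) (γ : List ℕ) :
    hBlockWeight w (d :: γ) = w ^ d * if γ = [] then 1 else 0 := by
  cases γ <;> simp [hBlockWeight]

lemma isQSCharacter_hBlockWeight (w : ℝ) : IsQSCharacter (hBlockWeight w) := by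
  intro x y hx hy
  rcases x with _ | ⟨a, A⟩ <;> rcases y with _ | ⟨b, B⟩
  · simp [hBlockWeight]
  · simp [hBlockWeight]
  · simp [hBlockWeight]
  · have hA := (isComposition_cons.1 hx).2
    have hB := (isComposition_cons.1 hy).2
    simp only [qsSum_cons_cons, hBlockWeight_cons, qsSum_const_mul]
    rw [isQSCharacter_ite_eq_nil _ _ hA hy, isQSCharacter_ite_eq_nil _ _ hx hB,
      isQSCharacter_ite_eq_nil _ _ hA hB]
    simp [pow_add]

def onesWeight (f : ℕ → ℝ) (p : List ℕ) : ℝ := if ∀ n ∈ p, n = 1 then f p.length else 0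

lemma onesWeight_cons (f : ℕ → ℝ) (d : ℕ) (γ : List ℕ) :
    onesWeight f (d :: γ) = (if d = 1 then 1 else 0) * onesWeight (fun n => f (n + 1)) γ := by
  by_cases hd : d = 1 <;> simp [onesWeight, hd]

/-- Parts are positive, so a quasi-shuffle of two words of ones that merges two parts is not a
word of ones: only the `(k + l).choose k` shuffles contribute. -/
theorem qsSum_onesWeight : ∀ (x y : List ℕ) (f : ℕ → ℝ), IsComposition x → IsComposition y →
    qsSum x y (onesWeight f) = if (∀ n ∈ x, n = 1) ∧ (∀ n ∈ y, n = 1) then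
      ((x.length + y.length).choose x.length : ℝ) * f (x.length + y.length) else 0
  | [], y, f, _, _ => by simp [onesWeight]
  | a :: A, [], f, _, _ => by simp [onesWeight]
  | a :: A, b :: B, f, hx, hy => by
    rw [isComposition_cons] at hx hy
    simp only [qsSum_cons_cons, onesWeight_cons, qsSum_const_mul]
    rw [qsSum_onesWeight A (b :: B) _ hx.2 (isComposition_cons.2 hy),
      qsSum_onesWeight (a :: A) B _ (isComposition_cons.2 hx) hy.2,
      if_neg (show a + b ≠ 1 by omega)]
    rcases eq_or_ne a 1 with rfl | ha
    swap
    · simp [ha]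
    rcases eq_or_ne b 1 with rfl | hb
    swap
    · simp [hb]
    simp only [if_true, one_mul, List.forall_mem_cons, true_and, List.length_cons]
    split_ifs
    · generalize A.length = k
      generalize B.length = l
      have pascal : ((k + 1 + (l + 1)).choose (k + 1) : ℝ) =
          (k + (l + 1)).choose k + (k + 1 + l).choose (k + 1) := by
        rw [show k + 1 + (l + 1) = k + l + 1 + 1 by omega, Nat.choose_succ_succ',
          show k + (l + 1) = k + l + 1 by omega, show k + 1 + l = k + l + 1 by omega]
        push_cast
        ring
      rw [show k + (l + 1) + 1 = k + 1 + (l + 1) by omega,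
        show k + 1 + l + 1 = k + 1 + (l + 1) by omega, pascal]
      ring
    · simp
  termination_by x y => x.length + y.length

lemma isQSCharacter_onesWeight_exp (w : ℝ) :
    IsQSCharacter (onesWeight fun n => w ^ n / n.factorial) := by
  intro x y hx hy
  rw [qsSum_onesWeight x y _ hx hy, onesWeight, onesWeight]
  by_cases h : (∀ n ∈ x, n = 1) ∧ ∀ n ∈ y, n = 1
  · rw [if_pos h, if_pos h.1, if_pos h.2, Nat.cast_add_choose, pow_add]
    field_simp
  · rw [if_neg h]
    by_cases hx1 : ∀ n ∈ x, n = 1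
    · rw [if_neg fun hy1 => h ⟨hx1, hy1⟩, mul_zero]
    · rw [if_neg hx1, zero_mul]

lemma Mcirc_nil : Mcirc [] = fun l => if l = [] then 1 else 0 := rfl

lemma Mcirc_cons_true (w : ℝ) (v : List (ℝ × Bool)) :
    Mcirc ((w, true) :: v) = convolve (hBlockWeight w) (Mcirc v) := rfl

lemma Mcirc_cons_false (w : ℝ) (v : List (ℝ × Bool)) :
    Mcirc ((w, false) :: v) = convolve (onesWeight fun n => w ^ n / n.factorial) (Mcirc v) :=
  rfl

theorem isQSCharacter_Mcirc (u : List (ℝ × Bool)) : IsQSCharacter (Mcirc u) := by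
  induction u with
  | nil => exact Mcirc_nil ▸ isQSCharacter_ite_eq_nil
  | cons p v ih =>
    obtain ⟨w, _ | _⟩ := p
    · exact Mcirc_cons_false w v ▸ (isQSCharacter_onesWeight_exp w).convolve ih
    · exact Mcirc_cons_true w v ▸ (isQSCharacter_hBlockWeight w).convolve ih

theorem phiU_multiplicative_general (u : List (ℝ × Bool)) :
    ∀ α β : Comp,
      (∑' γ : Comp, (qsCoeff α.1 β.1 γ.1 : ℝ) * Mcirc u γ.1)
        = Mcirc u α.1 * Mcirc u β.1 := by
  intro α β
  simp only [qsCoeff_eq_count]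
  rw [(hasSum_count_mul _ (fun γ => α.2.of_mem_quasiShuffles β.2) (Mcirc u)).tsum_eq]
  exact isQSCharacter_Mcirc u α.1 β.1 α.2 β.2

/-- for every `u ∈ U₀`, `φ_u` is multiplicative. -/
theorem phiU_multiplicative (u : List (ℝ × Bool)) (hu : memU0 u) :
    ∀ α β : Comp,
      (∑' γ : Comp, (qsCoeff α.1 β.1 γ.1 : ℝ) * Mcirc u γ.1)
        = Mcirc u α.1 * Mcirc u β.1 :=
  phiU_multiplicative_general u

end GK
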